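/- arXiv:1903.00598 — 3 statements merged into one kernel-verified Lean document; each statement's English description precedes it below -/
import Mathlib

section
/- Let R = ℝ[t^{d₁},…,t^{d_r}] with gcd = 1 and conductor 𝔠, and let D_k denote the maximal number of distinct real zeros of a nonzero polynomial in R of degree at most k. Then for all k ≥ 0, D_{𝔠+k} = D_𝔠 + k. -/
/-!
Descartes' rule of signs bounds the number of distinct real roots of `p` by
`V(p) + V(p(-t)) + [p(0) = 0]`, where `V` counts sign changes of the coefficients, and the bound
is attained within every sign pattern (Grabiner): build the polynomial one top monomial at a time,
each with a coefficient so small that the signs at the sample points where the previous polynomial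
alternates are kept, while far out the new monomial dominates and adds a sign change whenever the
pattern does. As `R` is spanned by monomials, `D_k` is thus the largest Descartes bound of a
nonzero polynomial in `R` of degree at most `k`.

Above the conductor, `t^m` and `t^(m+1)` lie in `R`. Appending `-lc(f) t^(m+1)` to `f` of degree
`≤ m` adds a sign change, so `D_{m+1} ≥ D_m + 1`. Conversely, removing the top term of `f` of
degree `m + 1` loses exactly one change if the next exponent is `m` (the sign comparisons in `f`
and in `f(-t)` then have opposite outcomes), and at most two otherwise, one of which is regained
by inserting a monomial of opposite sign at `t^m`.
-/

open Polynomial Filter Topology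

/-- The `k`-th Descartes number of a subalgebra `R ⊆ ℝ[t]`: the maximal number of
distinct real zeros of a nonzero polynomial in `R` of degree at most `k`. -/
noncomputable def descartesNumber (R : Subalgebra ℝ ℝ[X]) (k : ℕ) : ℕ :=
  sSup {m : ℕ | ∃ f ∈ R, f ≠ 0 ∧ f.natDegree ≤ k ∧ f.roots.toFinset.card = m}

section Signs

variable {α : Type*} [CommRing α] [LinearOrder α] [IsStrictOrderedRing α] {u u' v v' : α}

lemma sign_eq_neg_sign_iff_mul_neg (hv : v ≠ 0) :
    SignType.sign v = -SignType.sign u ↔ u * v < 0 := by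
  rcases lt_trichotomy u 0 with hu | hu | hu <;> rcases hv.lt_or_gt with hv | hv <;>
    simp [sign_neg, sign_pos, hu, hv, mul_neg_of_neg_of_pos, mul_neg_of_pos_of_neg,
      mul_pos_of_neg_of_neg, not_lt_of_gt]

lemma zero_lt_mul_mul_of_sign_congr (hu : 0 < u * u') (hv : 0 < v * v') :
    0 < u * v * (u' * v') := by
  have := mul_pos hu hv
  rwa [mul_mul_mul_comm] at this

lemma mul_neg_of_sign_congr (hu : 0 < u * u') (hv : 0 < v * v') (h : u * v < 0) :
    u' * v' < 0 :=
  neg_of_mul_pos_right (zero_lt_mul_mul_of_sign_congr hu hv) h.le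

lemma mul_pos_of_sign_congr (hu : 0 < u * u') (hv : 0 < v * v') (h : 0 < u * v) :
    0 < u' * v' :=
  pos_of_mul_pos_right (zero_lt_mul_mul_of_sign_congr hu hv) h.le

end Signs

namespace Polynomial

section TopMonomial

variable {K : Type*} [Semiring K] {q : K[X]} {b : K} {N : ℕ}

lemma leadingCoeff_add_C_mul_X_pow (hb : b ≠ 0) (hN : q.natDegree < N) :
    (q + C b * X ^ N).leadingCoeff = b := by
  rw [leadingCoeff_add_of_degree_lt (degree_lt_degree (by rwa [natDegree_C_mul_X_pow N b hb])),
    leadingCoeff_C_mul_X_pow]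

lemma natDegree_add_C_mul_X_pow (hb : b ≠ 0) (hN : q.natDegree < N) :
    (q + C b * X ^ N).natDegree = N := by
  rw [natDegree_add_eq_right_of_natDegree_lt (by rwa [natDegree_C_mul_X_pow N b hb]),
    natDegree_C_mul_X_pow N b hb]

lemma support_add_C_mul_X_pow (hb : b ≠ 0) (hN : q.natDegree < N) :
    (q + C b * X ^ N).support = insert N q.support := by
  ext n
  by_cases hn : n = N
  · subst hn
    simp [coeff_eq_zero_of_natDegree_lt hN, hb]
  · simp [hn, coeff_X_pow]

lemma add_C_mul_X_pow_ne_zero (hb : b ≠ 0) (hN : q.natDegree < N) : q + C b * X ^ N ≠ 0 := by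
  rw [← leadingCoeff_ne_zero, leadingCoeff_add_C_mul_X_pow hb hN]
  exact hb

end TopMonomial

lemma comp_neg_X_add_C_mul_X_pow {K : Type*} [CommRing K] (q : K[X]) (b : K) (N : ℕ) :
    (q + C b * X ^ N).comp (-X) = q.comp (-X) + C (b * (-1) ^ N) * X ^ N := by
  rw [add_comp, mul_comp, C_comp, X_pow_comp, neg_pow, map_mul, map_pow, map_neg, map_one]
  ring

lemma signVariations_add_C_mul_X_pow {K : Type*} [CommRing K] [LinearOrder K]
    [IsStrictOrderedRing K] {q : K[X]} {b : K} {N : ℕ} (hb : b ≠ 0) (hN : q.natDegree < N) :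
    signVariations (q + C b * X ^ N) =
      signVariations q + if q.leadingCoeff * b < 0 then 1 else 0 := by
  rw [signVariations_eq_eraseLead_add_ite (add_C_mul_X_pow_ne_zero hb hN),
    eraseLead_add_of_natDegree_lt_right (by rwa [natDegree_C_mul_X_pow N b hb]),
    eraseLead_C_mul_X_pow, add_zero, leadingCoeff_add_C_mul_X_pow hb hN]
  simp only [sign_eq_neg_sign_iff_mul_neg hb]

lemma natDegree_comp_neg_X {K : Type*} [Ring K] (p : K[X]) :
    (p.comp (-X)).natDegree = p.natDegree :=
  natDegree_eq_of_degree_eq degree_comp_neg_X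

lemma natDegree_eq_of_support_eq {K : Type*} [Semiring K] {p q : K[X]}
    (h : p.support = q.support) : p.natDegree = q.natDegree := by
  simp only [natDegree, degree, h]

/-- Descartes' rule of signs bounds the positive roots by `signVariations p`, the negative roots
by `signVariations (p.comp (-X))`, and `0` may be one more root. -/
noncomputable def descartesBound (p : ℝ[X]) : ℕ :=
  signVariations p + signVariations (p.comp (-X)) + if p.coeff 0 = 0 then 1 else 0

lemma descartesBound_add_C_mul_X_pow {q : ℝ[X]} {b : ℝ} {N : ℕ} (hb : b ≠ 0)
    (hN : q.natDegree < N) :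
    descartesBound (q + C b * X ^ N) =
      descartesBound q + (if q.leadingCoeff * b < 0 then 1 else 0) +
        if (-1) ^ q.natDegree * q.leadingCoeff * (b * (-1) ^ N) < 0 then 1 else 0 := by
  have hb' : b * (-1) ^ N ≠ 0 := mul_ne_zero hb (by simp)
  have hcoeff : (q + C b * X ^ N).coeff 0 = q.coeff 0 := by
    simp [coeff_X_pow, ((Nat.zero_le _).trans_lt hN).ne]
  rw [descartesBound, descartesBound, comp_neg_X_add_C_mul_X_pow,
    signVariations_add_C_mul_X_pow hb hN,
    signVariations_add_C_mul_X_pow hb' (by rwa [natDegree_comp_neg_X]),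
    comp_neg_X_leadingCoeff_eq, hcoeff]
  ring

noncomputable def positiveRoots (p : ℝ[X]) : Finset ℝ := p.roots.toFinset.filter (0 < ·)

lemma mem_positiveRoots {p : ℝ[X]} (hp : p ≠ 0) {x : ℝ} :
    x ∈ positiveRoots p ↔ p.eval x = 0 ∧ 0 < x := by
  simp [positiveRoots, mem_roots hp]

lemma card_positiveRoots_le_signVariations (p : ℝ[X]) :
    (positiveRoots p).card ≤ signVariations p :=
  calc (positiveRoots p).card = (p.roots.filter (0 < ·)).toFinset.card := by
        rw [positiveRoots, Multiset.toFinset_filter]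
    _ ≤ p.roots.countP (0 < ·) := by
        rw [Multiset.countP_eq_card_filter]
        exact Multiset.toFinset_card_le _
    _ ≤ signVariations p := roots_countP_pos_le_signVariations p

lemma card_roots_toFinset_eq {p : ℝ[X]} (hp : p ≠ 0) :
    p.roots.toFinset.card = (positiveRoots p).card + (positiveRoots (p.comp (-X))).card +
      if p.coeff 0 = 0 then 1 else 0 := by
  set s := p.roots.toFinset
  have hneg : positiveRoots (p.comp (-X)) = (s.filter (· < 0)).image (- ·) := by
    ext x
    simp only [positiveRoots, roots_comp_neg_X, Multiset.toFinset_map, Finset.mem_filter,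
      Finset.mem_image, s]
    constructor
    · rintro ⟨⟨a, ha, rfl⟩, hx⟩
      exact ⟨a, ⟨ha, neg_pos.mp hx⟩, rfl⟩
    · rintro ⟨a, ⟨ha, ha0⟩, rfl⟩
      exact ⟨⟨a, ha, rfl⟩, neg_pos.mpr ha0⟩
  have hzero : s.filter (· = 0) = if p.coeff 0 = 0 then {0} else ∅ := by
    rw [Finset.filter_eq']
    simp [s, mem_roots hp, coeff_zero_eq_eval_zero]
  have hnonpos : s.filter (¬ 0 < ·) = s.filter (· < 0) ∪ s.filter (· = 0) := by
    rw [← Finset.filter_or]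
    exact Finset.filter_congr fun x _ => not_lt.trans le_iff_lt_or_eq
  rw [← Finset.card_filter_add_card_filter_not (p := (0 < ·)), hnonpos, add_assoc,
    Finset.card_union_of_disjoint (Finset.disjoint_filter.2 fun x _ hx hx0 => hx.ne hx0), hneg,
    hzero, Finset.card_image_of_injective _ neg_injective]
  split <;> rfl

theorem card_roots_toFinset_le_descartesBound {p : ℝ[X]} (hp : p ≠ 0) :
    p.roots.toFinset.card ≤ descartesBound p := by
  rw [card_roots_toFinset_eq hp, descartesBound]
  gcongr <;> exact card_positiveRoots_le_signVariations _

lemma exists_mem_Ioo_eval_eq_zero (f : ℝ[X]) {a b : ℝ} (hab : a < b)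
    (h : f.eval a * f.eval b < 0) : ∃ r ∈ Set.Ioo a b, f.eval r = 0 := by
  have hcont := f.continuous.continuousOn (s := Set.Icc a b)
  rcases mul_neg_iff.mp h with ⟨ha, hb⟩ | ⟨ha, hb⟩
  · exact intermediate_value_Ioo' hab.le hcont ⟨hb, ha⟩
  · exact intermediate_value_Ioo hab.le hcont ⟨ha, hb⟩

lemma eventually_zero_lt_eval_mul_leadingCoeff {f : ℝ[X]} (hf : f ≠ 0) :
    ∀ᶠ T in atTop, 0 < f.eval T * f.leadingCoeff := by
  have hlc : f.leadingCoeff ≠ 0 := leadingCoeff_ne_zero.mpr hf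
  by_cases hdeg : 0 < f.degree
  · have hlim := (C f.leadingCoeff * f).tendsto_atTop_of_leadingCoeff_nonneg
      (by rwa [degree_C_mul hlc]) (by rw [leadingCoeff_mul, leadingCoeff_C]; exact mul_self_nonneg _)
    filter_upwards [hlim.eventually_gt_atTop 0] with T hT
    simpa [mul_comm] using hT
  · rw [eq_C_of_degree_le_zero (not_lt.mp hdeg)] at hlc ⊢
    exact Eventually.of_forall fun T => by simpa [mul_self_pos] using hlc

lemma eventually_zero_lt_eval_mul_eval_add_C_mul_X_pow (f : ℝ[X]) {t : ℝ} (ht : f.eval t ≠ 0)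
    (b : ℝ) (N : ℕ) : ∀ᶠ γ in 𝓝 0, 0 < f.eval t * (f + C (γ * b) * X ^ N).eval t := by
  have hlim : Tendsto (fun γ : ℝ => f.eval t * (f.eval t + γ * b * t ^ N)) (𝓝 0)
      (𝓝 (f.eval t * f.eval t)) := by
    simpa using (show Continuous fun γ : ℝ => f.eval t * (f.eval t + γ * b * t ^ N)
      by fun_prop).tendsto 0
  simpa using hlim.eventually_const_lt (mul_self_pos.mpr ht)

/-- Sample points forcing `k` positive roots of `f`; unlike the roots themselves, they survive
small perturbations of `f`. -/
def AlternatesAt (f : ℝ[X]) (x : ℕ → ℝ) (k : ℕ) (s : ℝ) : Prop :=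
  0 < x 0 ∧ (∀ i < k, x i < x (i + 1) ∧ f.eval (x i) * f.eval (x (i + 1)) < 0) ∧
    0 < f.eval (x k) * s

namespace AlternatesAt

variable {f g : ℝ[X]} {x : ℕ → ℝ} {k : ℕ} {a b : ℝ}

lemma eval_ne_zero (h : AlternatesAt f x k a) {i : ℕ} (hi : i ≤ k) : f.eval (x i) ≠ 0 := by
  rcases hi.lt_or_eq with hi | rfl
  exacts [left_ne_zero_of_mul (h.2.1 i hi).2.ne, left_ne_zero_of_mul h.2.2.ne']

lemma le_card_positiveRoots (hf : f ≠ 0) (h : AlternatesAt f x k a) :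
    k ≤ (positiveRoots f).card := by
  obtain ⟨hx0, hx, -⟩ := h
  have hmono : StrictMonoOn x (Set.Iic k) := strictMonoOn_Iic_of_lt_succ fun i hi => (hx i hi).1
  choose! r hr hr0 using fun i (hi : i < k) => exists_mem_Ioo_eval_eq_zero f (hx i hi).1 (hx i hi).2
  have hrmono : StrictMonoOn r (Set.Iio k) := fun i hi j hj hij =>
    calc r i < x (i + 1) := (hr i hi).2
      _ ≤ x j := hmono.monotoneOn (show i + 1 ≤ k from hi) (show j ≤ k from le_of_lt hj) hij
      _ < r j := (hr j hj).1
  calc k = (Finset.range k).card := (Finset.card_range k).symm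
    _ ≤ (positiveRoots f).card := by
      refine Finset.card_le_card_of_injOn r (fun i hi => ?_) (by simpa using hrmono.injOn)
      have hi : i < k := Finset.mem_range.mp hi
      rw [Finset.mem_coe, mem_positiveRoots hf]
      refine ⟨hr0 i hi, hx0.trans_le ?_ |>.trans (hr i hi).1⟩
      exact hmono.monotoneOn (show 0 ≤ k from Nat.zero_le k) (show i ≤ k from hi.le) (Nat.zero_le i)

lemma of_signs (h : AlternatesAt f x k a) (hg : ∀ i ≤ k, 0 < f.eval (x i) * g.eval (x i)) :
    AlternatesAt g x k a :=
  ⟨h.1, fun i hi => ⟨(h.2.1 i hi).1, mul_neg_of_sign_congr (hg i hi.le) (hg (i + 1) hi)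
    (h.2.1 i hi).2⟩, mul_pos_of_sign_congr (hg k le_rfl) (mul_self_pos.mpr
    (right_ne_zero_of_mul h.2.2.ne')) h.2.2⟩

lemma of_mul_pos (h : AlternatesAt f x k a) (hab : 0 < a * b) : AlternatesAt f x k b :=
  ⟨h.1, h.2.1, mul_pos_of_sign_congr (mul_self_pos.mpr (h.eval_ne_zero le_rfl)) hab h.2.2⟩

lemma update_succ (h : AlternatesAt f x k a) {T : ℝ} (hT : x k < T) (hab : a * b < 0)
    (hTb : 0 < f.eval T * b) : AlternatesAt f (Function.update x (k + 1) T) (k + 1) b := by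
  refine ⟨by simpa using h.1, fun i hi => ?_, by simpa using hTb⟩
  rcases (Nat.lt_succ_iff.mp hi).lt_or_eq with hi | rfl
  · simpa [Function.update_of_ne (show i ≠ k + 1 by omega),
      Function.update_of_ne (show i + 1 ≠ k + 1 by omega)] using h.2.1 i hi
  · simp only [Function.update_self, Function.update_of_ne (show i ≠ i + 1 by omega)]
    exact ⟨hT, mul_neg_of_sign_congr (by rw [mul_comm]; exact h.2.2) (by rwa [mul_comm]) hab⟩

lemma eventually_exists_add_C_mul_X_pow {N : ℕ} (h : AlternatesAt f x k a) (hb : b ≠ 0)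
    (hN : f.natDegree < N) :
    ∀ᶠ γ in 𝓝[>] 0, ∃ y, AlternatesAt (f + C (γ * b) * X ^ N) y
      (k + if a * b < 0 then 1 else 0) b := by
  have hsigns : ∀ᶠ γ in 𝓝 0, ∀ i ∈ Finset.range (k + 1),
      0 < f.eval (x i) * (f + C (γ * b) * X ^ N).eval (x i) :=
    (eventually_all_finset _).mpr fun i hi => eventually_zero_lt_eval_mul_eval_add_C_mul_X_pow f
      (h.eval_ne_zero (Finset.mem_range_succ_iff.mp hi)) b N
  filter_upwards [nhdsWithin_le_nhds hsigns, self_mem_nhdsWithin] with γ hγ (hγ0 : 0 < γ)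
  have hγb : γ * b ≠ 0 := mul_ne_zero hγ0.ne' hb
  have hg := h.of_signs fun i hi => hγ i (Finset.mem_range_succ_iff.mpr hi)
  split_ifs with hab
  · obtain ⟨T, hT, hxT⟩ := ((eventually_zero_lt_eval_mul_leadingCoeff
      (add_C_mul_X_pow_ne_zero hγb hN)).and (eventually_gt_atTop (x k))).exists
    rw [leadingCoeff_add_C_mul_X_pow hγb hN, mul_left_comm] at hT
    exact ⟨_, hg.update_succ hxT hab (pos_of_mul_pos_right hT hγ0.le)⟩
  · have ha : a ≠ 0 := right_ne_zero_of_mul h.2.2.ne'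
    exact ⟨x, hg.of_mul_pos ((not_lt.mp hab).lt_of_ne (mul_ne_zero ha hb).symm)⟩

end AlternatesAt

lemma exists_alternatesAt_zero {f : ℝ[X]} (hf : f ≠ 0) :
    ∃ x, AlternatesAt f x 0 f.leadingCoeff := by
  obtain ⟨T, hT, hT0⟩ := ((eventually_zero_lt_eval_mul_leadingCoeff hf).and
    (eventually_gt_atTop 0)).exists
  exact ⟨fun _ => T, hT0, by simp, hT⟩

def RealizesDescartesBound (f p : ℝ[X]) : Prop :=
  f.support = p.support ∧ (∃ x, AlternatesAt f x (signVariations p) p.leadingCoeff) ∧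
    ∃ x, AlternatesAt (f.comp (-X)) x (signVariations (p.comp (-X))) (p.comp (-X)).leadingCoeff

lemma RealizesDescartesBound.descartesBound_le_card_roots {f p : ℝ[X]}
    (h : RealizesDescartesBound f p) (hp : p ≠ 0) :
    descartesBound p ≤ f.roots.toFinset.card := by
  obtain ⟨hsupp, ⟨x, hpos⟩, ⟨y, hneg⟩⟩ := h
  have hf : f ≠ 0 := fun h => hp (support_eq_empty.mp (by rw [← hsupp, h, support_zero]))
  have hcoeff : f.coeff 0 = 0 ↔ p.coeff 0 = 0 := by
    simp only [← notMem_support_iff, hsupp]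
  rw [card_roots_toFinset_eq hf, descartesBound]
  simp only [hcoeff]
  gcongr
  · exact hpos.le_card_positiveRoots hf
  · exact hneg.le_card_positiveRoots (mt comp_neg_X_eq_zero_iff.mp hf)

lemma realizesDescartesBound_C_mul_X_pow {a : ℝ} (ha : a ≠ 0) (n : ℕ) :
    RealizesDescartesBound (C a * X ^ n) (C a * X ^ n) := by
  have hcomp : (C a * X ^ n).comp (-X) = C (a * (-1) ^ n) * X ^ n := by
    simpa using comp_neg_X_add_C_mul_X_pow 0 a n
  have hsv : ∀ c : ℝ, signVariations (C c * X ^ n) = 0 := fun c => by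
    rw [C_mul_X_pow_eq_monomial, signVariations_monomial]
  refine ⟨rfl, ?_, ?_⟩
  · rw [hsv]
    exact exists_alternatesAt_zero (by simp [ha])
  · rw [hcomp, hsv]
    exact exists_alternatesAt_zero (by simp [ha])

lemma RealizesDescartesBound.exists_add_C_mul_X_pow {f q : ℝ[X]} {b : ℝ} {N : ℕ}
    (h : RealizesDescartesBound f q) (hb : b ≠ 0) (hN : q.natDegree < N) :
    ∃ g, RealizesDescartesBound g (q + C b * X ^ N) := by
  obtain ⟨hsupp, ⟨x, hpos⟩, ⟨y, hneg⟩⟩ := h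
  have hb' : b * (-1) ^ N ≠ 0 := mul_ne_zero hb (by simp)
  have hfN : f.natDegree < N := natDegree_eq_of_support_eq hsupp ▸ hN
  have hqN' : (q.comp (-X)).natDegree < N := by rwa [natDegree_comp_neg_X]
  obtain ⟨γ, ⟨hγpos, hγneg⟩, hγ⟩ := (((hpos.eventually_exists_add_C_mul_X_pow hb hfN).and
    (hneg.eventually_exists_add_C_mul_X_pow hb' (by rwa [natDegree_comp_neg_X]))).and
    self_mem_nhdsWithin).exists
  have hγb : γ * b ≠ 0 := mul_ne_zero (ne_of_gt hγ) hb
  refine ⟨f + C (γ * b) * X ^ N, ?_, ?_, ?_⟩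
  · rw [support_add_C_mul_X_pow hγb hfN, support_add_C_mul_X_pow hb hN, hsupp]
  · rwa [signVariations_add_C_mul_X_pow hb hN, leadingCoeff_add_C_mul_X_pow hb hN]
  · rw [comp_neg_X_add_C_mul_X_pow, comp_neg_X_add_C_mul_X_pow,
      signVariations_add_C_mul_X_pow hb' hqN', leadingCoeff_add_C_mul_X_pow hb' hqN', mul_assoc]
    exact hγneg

lemma exists_realizesDescartesBound {p : ℝ[X]} (hp : p ≠ 0) :
    ∃ f, RealizesDescartesBound f p := by
  induction hn : p.natDegree using Nat.strong_induction_on generalizing p with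
  | _ n ih =>
  rw [← eraseLead_add_C_mul_X_pow p]
  have hlc : p.leadingCoeff ≠ 0 := leadingCoeff_ne_zero.mpr hp
  rcases eq_or_ne p.eraseLead 0 with h0 | h0
  · rw [h0, zero_add]
    exact ⟨_, realizesDescartesBound_C_mul_X_pow hlc _⟩
  · have hlt := (eraseLead_natDegree_lt_or_eraseLead_eq_zero p).resolve_right h0
    obtain ⟨f, hf⟩ := ih _ (hn ▸ hlt) h0 rfl
    exact hf.exists_add_C_mul_X_pow hlc hlt

theorem exists_support_eq_descartesBound_le_card_roots {p : ℝ[X]} (hp : p ≠ 0) :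
    ∃ f : ℝ[X], f.support = p.support ∧ descartesBound p ≤ f.roots.toFinset.card := by
  obtain ⟨f, hf⟩ := exists_realizesDescartesBound hp
  exact ⟨f, hf.1, hf.descartesBound_le_card_roots hp⟩

lemma exists_succ_descartesBound_le {f : ℝ[X]} (hf : f ≠ 0) {N : ℕ} (hN : f.natDegree < N) :
    ∃ g : ℝ[X], g ≠ 0 ∧ g.natDegree = N ∧ g.support = insert N f.support ∧
      descartesBound f + 1 ≤ descartesBound g := by
  have hlc : f.leadingCoeff ≠ 0 := leadingCoeff_ne_zero.mpr hf
  have hb : -f.leadingCoeff ≠ 0 := neg_ne_zero.mpr hlc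
  refine ⟨f + C (-f.leadingCoeff) * X ^ N, add_C_mul_X_pow_ne_zero hb hN,
    natDegree_add_C_mul_X_pow hb hN, support_add_C_mul_X_pow hb hN, ?_⟩
  rw [descartesBound_add_C_mul_X_pow hb hN, if_pos (by simpa using mul_self_pos.mpr hlc)]
  omega

lemma exists_descartesBound_le_succ {f : ℝ[X]} {m : ℕ} (hf : f.natDegree = m + 1) :
    ∃ g : ℝ[X], g ≠ 0 ∧ g.natDegree ≤ m ∧ g.support ⊆ insert m f.support ∧
      descartesBound f ≤ descartesBound g + 1 := by
  set q := f.eraseLead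
  have hlc : f.leadingCoeff ≠ 0 := leadingCoeff_ne_zero.mpr (by rintro rfl; simp at hf)
  have hqm : q.natDegree ≤ m := (eraseLead_natDegree_le f).trans (by omega)
  have hqf : q.support ⊆ f.support := eraseLead_support f ▸ Finset.erase_subset _ _
  have hW : descartesBound f = descartesBound q +
      (if q.leadingCoeff * f.leadingCoeff < 0 then 1 else 0) +
      if (-1) ^ q.natDegree * q.leadingCoeff * (f.leadingCoeff * (-1) ^ (m + 1)) < 0
        then 1 else 0 := by
    conv_lhs => rw [← eraseLead_add_C_mul_X_pow f, hf]
    exact descartesBound_add_C_mul_X_pow hlc (Nat.lt_succ_of_le hqm)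
  rcases eq_or_ne q 0 with hq | hq
  · refine ⟨X ^ m, pow_ne_zero _ X_ne_zero, (natDegree_X_pow m).le, by simp, ?_⟩
    rw [hW, hq]
    simp [descartesBound]
  rcases hqm.lt_or_eq with hlt | heq
  · obtain ⟨g, hg0, hgm, hgsupp, hqg⟩ := exists_succ_descartesBound_le hq hlt
    refine ⟨g, hg0, hgm.le, hgsupp ▸ Finset.insert_subset_insert _ hqf, ?_⟩
    rw [hW]
    split_ifs <;> omega
  · refine ⟨q, hq, heq.le, hqf.trans (Finset.subset_insert _ _), ?_⟩
    have hsign : (-1) ^ m * q.leadingCoeff * (f.leadingCoeff * (-1) ^ (m + 1)) =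
        -(q.leadingCoeff * f.leadingCoeff) := by
      rw [pow_succ, show ∀ u v w : ℝ, u * v * (w * (u * -1)) = -(v * w) * (u * u) by
        intros; ring, ← mul_pow]
      simp
    rw [hW, heq, hsign]
    split_ifs <;> first | omega | linarith

lemma mem_adjoin_X_pow_iff {K ι : Type*} [CommSemiring K] (d : ι → ℕ) {f : K[X]} :
    f ∈ Algebra.adjoin K (Set.range fun i => (X : K[X]) ^ d i) ↔
      ∀ n ∈ f.support, (X : K[X]) ^ n ∈ Algebra.adjoin K (Set.range fun i => (X : K[X]) ^ d i) := by
  set R := Algebra.adjoin K (Set.range fun i => (X : K[X]) ^ d i)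
  refine ⟨fun hf => ?_, fun h => ?_⟩
  · induction hf using Algebra.adjoin_induction with
    | mem g hg =>
      obtain ⟨i, rfl⟩ := hg
      intro n hn
      simp only [X_pow_eq_monomial] at hn
      rw [Finset.mem_singleton.mp (support_monomial_subset _ _ hn)]
      exact Algebra.subset_adjoin ⟨i, rfl⟩
    | algebraMap a =>
      intro n hn
      rw [algebraMap_eq] at hn
      rw [Finset.mem_singleton.mp (support_C_subset a hn), pow_zero]
      exact one_mem R
    | add g h _ _ hg hh =>
      intro n hn
      exact (Finset.mem_union.mp (support_add hn)).elim (hg n) (hh n)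
    | mul g h _ _ hg hh =>
      intro n hn
      obtain ⟨⟨i, j⟩, hij, hne⟩ := Finset.exists_ne_zero_of_sum_ne_zero
        (coeff_mul g h n ▸ mem_support_iff.mp hn)
      rw [← Finset.HasAntidiagonal.mem_antidiagonal.mp hij, pow_add]
      exact mul_mem (hg i (mem_support_iff.mpr (left_ne_zero_of_mul hne)))
        (hh j (mem_support_iff.mpr (right_ne_zero_of_mul hne)))
  · rw [f.as_sum_support_C_mul_X_pow]
    exact Subalgebra.sum_mem R fun n hn => mul_mem (Subalgebra.algebraMap_mem R _) (h n hn)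

end Polynomial

section DescartesNumber

lemma bddAbove_card_roots (R : Subalgebra ℝ ℝ[X]) (k : ℕ) :
    BddAbove {m : ℕ | ∃ f ∈ R, f ≠ 0 ∧ f.natDegree ≤ k ∧ f.roots.toFinset.card = m} := by
  refine ⟨k, ?_⟩
  rintro _ ⟨f, -, -, hk, rfl⟩
  exact (Multiset.toFinset_card_le _).trans (f.card_roots'.trans hk)

lemma exists_descartesNumber_le_descartesBound (R : Subalgebra ℝ ℝ[X]) (k : ℕ) :
    ∃ f ∈ R, f ≠ 0 ∧ f.natDegree ≤ k ∧ descartesNumber R k ≤ descartesBound f := by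
  obtain ⟨f, hf, hf0, hk, hcard⟩ : descartesNumber R k ∈
      {m : ℕ | ∃ f ∈ R, f ≠ 0 ∧ f.natDegree ≤ k ∧ f.roots.toFinset.card = m} :=
    Nat.sSup_mem ⟨0, 1, one_mem R, one_ne_zero, by simp, by simp⟩ (bddAbove_card_roots R k)
  exact ⟨f, hf, hf0, hk, hcard ▸ card_roots_toFinset_le_descartesBound hf0⟩

variable {R : Subalgebra ℝ ℝ[X]} (hR : ∀ f : ℝ[X], f ∈ R ↔ ∀ n ∈ f.support, (X : ℝ[X]) ^ n ∈ R)
include hR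

lemma descartesBound_le_descartesNumber {f : ℝ[X]} {k : ℕ} (hf : f ∈ R) (hf0 : f ≠ 0)
    (hk : f.natDegree ≤ k) : descartesBound f ≤ descartesNumber R k := by
  obtain ⟨g, hsupp, hfg⟩ := exists_support_eq_descartesBound_le_card_roots hf0
  have hg : g ∈ R := (hR g).mpr (hsupp ▸ (hR f).mp hf)
  have hg0 : g ≠ 0 := fun h => hf0 (support_eq_empty.mp (by rw [← hsupp, h, support_zero]))
  exact hfg.trans (le_csSup (bddAbove_card_roots R k)
    ⟨g, hg, hg0, natDegree_eq_of_support_eq hsupp ▸ hk, rfl⟩)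

lemma mem_of_support_subset_insert {f g : ℝ[X]} {N : ℕ} (hf : f ∈ R) (hN : (X : ℝ[X]) ^ N ∈ R)
    (hg : g.support ⊆ insert N f.support) : g ∈ R :=
  (hR g).mpr fun n hn => (Finset.mem_insert.mp (hg hn)).elim (· ▸ hN) ((hR f).mp hf n)

lemma descartesNumber_succ {m : ℕ} (hm : (X : ℝ[X]) ^ m ∈ R) (hm' : (X : ℝ[X]) ^ (m + 1) ∈ R) :
    descartesNumber R (m + 1) = descartesNumber R m + 1 := by
  apply le_antisymm
  · obtain ⟨f, hf, hf0, hk, hD⟩ := exists_descartesNumber_le_descartesBound R (m + 1)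
    rcases hk.lt_or_eq with hk | hk
    · exact hD.trans ((descartesBound_le_descartesNumber hR hf hf0 (Nat.lt_succ_iff.mp hk)).trans
        (Nat.le_succ _))
    · obtain ⟨g, hg0, hgm, hgsupp, hfg⟩ := exists_descartesBound_le_succ hk
      calc descartesNumber R (m + 1) ≤ descartesBound f := hD
        _ ≤ descartesBound g + 1 := hfg
        _ ≤ descartesNumber R m + 1 := by
          gcongr
          exact descartesBound_le_descartesNumber hR
            (mem_of_support_subset_insert hR hf hm hgsupp) hg0 hgm
  · obtain ⟨f, hf, hf0, hk, hD⟩ := exists_descartesNumber_le_descartesBound R m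
    obtain ⟨g, hg0, hgdeg, hgsupp, hfg⟩ := exists_succ_descartesBound_le hf0 (Nat.lt_succ_of_le hk)
    calc descartesNumber R m + 1 ≤ descartesBound f + 1 := by gcongr
      _ ≤ descartesBound g := hfg
      _ ≤ descartesNumber R (m + 1) := descartesBound_le_descartesNumber hR
          (mem_of_support_subset_insert hR hf hm' hgsupp.le) hg0 hgdeg.le

end DescartesNumber

theorem descartes_shift_general (r : ℕ) (dv : Fin r → ℕ)
    (R : Subalgebra ℝ ℝ[X])
    (hR : R = Algebra.adjoin ℝ (Set.range fun i => (X : ℝ[X]) ^ dv i))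
    (c : ℕ)
    (hc : IsLeast {c : ℕ | ∀ m : ℕ, c ≤ m → (X : ℝ[X]) ^ m ∈ R} c) :
    ∀ k : ℕ, descartesNumber R (c + k) = descartesNumber R c + k := by
  have hmonomial : ∀ f : ℝ[X], f ∈ R ↔ ∀ n ∈ f.support, (X : ℝ[X]) ^ n ∈ R := by
    subst hR
    exact fun f => mem_adjoin_X_pow_iff dv
  intro k
  induction k with
  | zero => rfl
  | succ k ih =>
    rw [← add_assoc, descartesNumber_succ hmonomial (hc.1 _ (by omega)) (hc.1 _ (by omega)), ih,
      add_assoc]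

/-- For `R = ℝ[t^{d₁},…,t^{d_r}]` with `gcd = 1` and conductor `c`, the Descartes
numbers satisfy `D_{c+k} = D_c + k` for all `k ≥ 0`. -/
theorem descartes_shift (r : ℕ) (dv : Fin r → ℕ)
    (hgcd : Finset.univ.gcd dv = 1)
    (R : Subalgebra ℝ ℝ[X])
    (hR : R = Algebra.adjoin ℝ (Set.range fun i => (X : ℝ[X]) ^ dv i))
    (c : ℕ)
    (hc : IsLeast {c : ℕ | ∀ m : ℕ, c ≤ m → (X : ℝ[X]) ^ m ∈ R} c) :
    ∀ k : ℕ, descartesNumber R (c + k) = descartesNumber R c + k :=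
  descartes_shift_general r dv R hR c hc
end

section
/- Let R = ℝ[t^{d₁},…,t^{d_r}] with gcd = 1, conductor 𝔠, Descartes numbers D_k, and let k ≥ 𝔠. If f ∈ R_{≤2k} is a nonnegative polynomial on ℝ with N distinct real zeros, then N ≤ k − ⌈(𝔠 − D_𝔠 − 1)/2⌉. -/
/-!
The zeros of a nonnegative `f` are local minima, hence zeros of `f'`, and Rolle's theorem puts
one more zero of `f'` strictly between any two consecutive ones. So `t f'`, which lies in `R` and
has degree at most `2k`, has at least `2N - 1` distinct real zeros, and it suffices to bound the
number of real zeros of any `g ∈ R_{≤ n}` by `D_c + n - c`.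

Descartes' rule of signs, applied to `g(t)` and `g(-t)`, shows that a polynomial with exponents
`e₀ < ⋯ < e_m` has at most `∑ w(e_{i+1} - e_i)` nonzero real zeros, where `w(d)` is `2` for even
and `1` for odd `d`. Conversely, exponents `e₀ < ⋯ < e_m` carry a polynomial with that many
nonzero real zeros: adjoin the exponents from the top down, each time replacing `Q` by
`t^b Q(t) + a` with `a` small and of sign opposite to `Q(0)`, which creates `w(b)` new sign
changes near `0`. Finally, replacing the exponents `≥ c` of `g` by `c` itself costs at most one
zero per degree above `c`, and leaves exponents that all lie in `R` and are at most `c`.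
-/

open Polynomial

open Filter Topology

def List.adjacentSum {α : Type*} (w : α → α → ℕ) : List α → ℕ
  | a :: b :: l => w a b + List.adjacentSum w (b :: l)
  | _ => 0

namespace List

variable {α β : Type*} (w : α → α → ℕ)

@[simp] theorem adjacentSum_singleton (a : α) : adjacentSum w [a] = 0 := rfl

@[simp] theorem adjacentSum_cons_cons (a b : α) (l : List α) :
    adjacentSum w (a :: b :: l) = w a b + adjacentSum w (b :: l) := rfl

theorem adjacentSum_append_cons (l m : List α) (a : α) :
    adjacentSum w (l ++ a :: m) = adjacentSum w (l ++ [a]) + adjacentSum w (a :: m) := by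
  induction l with
  | nil => simp
  | cons b l ih =>
    cases l with
    | nil => simp
    | cons c l => simp only [cons_append, adjacentSum_cons_cons] at ih ⊢; omega

theorem adjacentSum_map (f : β → α) (l : List β) :
    adjacentSum w (l.map f) = adjacentSum (fun a b => w (f a) (f b)) l := by
  induction l with
  | nil => rfl
  | cons b l ih =>
    cases l with
    | nil => rfl
    | cons c l => simp only [map_cons, adjacentSum_cons_cons] at ih ⊢; rw [ih]

end List

/-- The largest number of nonzero real roots of a binomial `a + b x ^ n`. -/
def gapWeight (n : ℕ) : ℕ := if Even n then 2 else 1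

theorem gapWeight_le_self {n : ℕ} (hn : 0 < n) : gapWeight n ≤ n := by
  unfold gapWeight
  split_ifs with h
  · obtain ⟨k, rfl⟩ := h; omega
  · omega

theorem gapWeight_le_add {a b c : ℕ} (hbc : b ≤ c) :
    gapWeight (c - a) ≤ gapWeight (b - a) + (c - b) := by
  unfold gapWeight
  rcases hbc.eq_or_lt with rfl | hbc
  · simp
  · split_ifs <;> omega

def chainWeight (l : List ℕ) : ℕ := l.adjacentSum fun a b => gapWeight (b - a)

@[simp] theorem chainWeight_cons_cons (a b : ℕ) (l : List ℕ) :
    chainWeight (a :: b :: l) = gapWeight (b - a) + chainWeight (b :: l) := rfl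

@[simp] theorem chainWeight_singleton (a : ℕ) : chainWeight [a] = 0 := rfl

theorem chainWeight_le_sub {e n : ℕ} {S : List ℕ} (hS : (e :: S).Pairwise (· < ·))
    (hn : ∀ m ∈ S, m ≤ n) : chainWeight (e :: S) ≤ n - e := by
  induction S generalizing e with
  | nil => simp
  | cons f S ih =>
    obtain ⟨hef, hfS⟩ := List.pairwise_cons.1 hS
    have h₁ := ih hfS fun m hm => hn m (List.mem_cons_of_mem f hm)
    have hef := hef f List.mem_cons_self
    have h₂ := gapWeight_le_self (Nat.sub_pos_of_lt hef)
    have h₃ := hn f List.mem_cons_self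
    rw [chainWeight_cons_cons]
    omega

theorem filter_lt_eq_nil {e c : ℕ} {S : List ℕ} (hS : (e :: S).Pairwise (· < ·)) (hce : c ≤ e) :
    (e :: S).filter (· < c) = [] := by
  refine List.filter_eq_nil_iff.2 fun m hm => ?_
  have : e ≤ m := by
    rcases List.mem_cons.1 hm with rfl | hm
    · rfl
    · exact (List.rel_of_pairwise_cons hS hm).le
  simp only [decide_eq_true_eq]
  omega

theorem chainWeight_le_chainWeight_filter_append {e c n : ℕ} {S : List ℕ} (hec : e < c)
    (hS : (e :: S).Pairwise (· < ·)) (hn : ∀ m ∈ S, m ≤ n) :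
    chainWeight (e :: S) ≤ chainWeight (e :: (S.filter (· < c) ++ [c])) + (n - c) := by
  induction S generalizing e with
  | nil => simp
  | cons f S ih =>
    obtain ⟨hef, hfS⟩ := List.pairwise_cons.1 hS
    have hef := hef f List.mem_cons_self
    by_cases hfc : f < c
    · have := ih hfc hfS fun m hm => hn m (List.mem_cons_of_mem f hm)
      simp only [List.filter_cons_of_pos (p := fun m => decide (m < c)) (by simpa using hfc),
        List.cons_append, chainWeight_cons_cons]
      omega
    · have h₁ := chainWeight_le_sub hfS fun m hm => hn m (List.mem_cons_of_mem f hm)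
      have h₂ := gapWeight_le_add (a := e) (not_lt.1 hfc)
      have h₃ := hn f List.mem_cons_self
      simp only [filter_lt_eq_nil hfS (not_lt.1 hfc), List.nil_append, chainWeight_cons_cons,
        chainWeight_singleton]
      omega

/-- The Descartes bound for the number of distinct real roots of a polynomial with exponents `S`;
`0` can be a root only if `0 ∉ S`. -/
def rootBound (S : List ℕ) : ℕ := (if 0 ∈ S then 0 else 1) + chainWeight S

theorem zero_mem_cons_iff {e : ℕ} {S : List ℕ} (hS : (e :: S).Pairwise (· < ·)) :
    0 ∈ e :: S ↔ e = 0 := by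
  refine ⟨fun h => ?_, fun h => h ▸ List.mem_cons_self⟩
  rcases List.mem_cons.1 h with h | h
  · exact h.symm
  · exact absurd (List.rel_of_pairwise_cons hS h) (Nat.not_lt_zero e)

theorem pairwise_filter_lt_append {l : List ℕ} (hl : l.Pairwise (· < ·)) (c : ℕ) :
    (l.filter (· < c) ++ [c]).Pairwise (· < ·) :=
  List.pairwise_append.2 ⟨hl.filter _, by simp, fun m hm k hk => by
    simp only [List.mem_filter, List.mem_singleton, decide_eq_true_eq] at hm hk; omega⟩

theorem rootBound_le_rootBound_filter_append {e c n : ℕ} {S : List ℕ}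
    (hS : (e :: S).Pairwise (· < ·)) (hn : ∀ m ∈ e :: S, m ≤ n) :
    rootBound (e :: S) ≤ rootBound ((e :: S).filter (· < c) ++ [c]) + (n - c) := by
  have hzero := zero_mem_cons_iff hS
  by_cases hec : e < c
  · have hS' := pairwise_filter_lt_append hS c
    rw [List.filter_cons_of_pos (by simpa using hec), List.cons_append] at hS' ⊢
    simp only [rootBound, hzero, zero_mem_cons_iff hS']
    have := chainWeight_le_chainWeight_filter_append hec hS
      fun m hm => hn m (List.mem_cons_of_mem e hm)
    omega
  · have h₁ := chainWeight_le_sub hS fun m hm => hn m (List.mem_cons_of_mem e hm)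
    have h₂ := hn e List.mem_cons_self
    simp only [filter_lt_eq_nil hS (not_lt.1 hec), List.nil_append, rootBound, hzero,
      List.mem_singleton, chainWeight_singleton]
    split_ifs <;> omega

def signChanges (l : List SignType) : ℕ :=
  l.adjacentSum fun a b => if a * b = -1 then 1 else 0

theorem signChanges_append_cons (l m : List SignType) (a : SignType) :
    signChanges (l ++ a :: m) = signChanges (l ++ [a]) + signChanges (a :: m) :=
  List.adjacentSum_append_cons _ l m a

theorem signChanges_map_mul {u : SignType} (hu : u * u = 1) (l : List SignType) :
    signChanges (l.map (u * ·)) = signChanges l := by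
  simp only [signChanges, List.adjacentSum_map, mul_mul_mul_comm u _ u, hu, one_mul]

theorem signChanges_insert {u : SignType} (hu : u * u = 1) (s : SignType) (l m : List SignType) :
    signChanges (l.map (u * ·) ++ u * s :: -s :: s :: m) =
      signChanges (l ++ s :: m) + signChanges [u * s, -s, s] := by
  have hl : l.map (u * ·) ++ [u * s] = (l ++ [s]).map (u * ·) := by simp
  rw [signChanges_append_cons, hl, signChanges_map_mul hu,
    show u * s :: -s :: s :: m = [u * s, -s] ++ s :: m from rfl, signChanges_append_cons _ m,
    signChanges_append_cons l m, List.cons_append, List.cons_append, List.nil_append]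
  ring

theorem signChanges_neg_one_pow_mul (b : ℕ) {s : SignType} (hs : s ≠ 0) :
    signChanges [(-1) ^ b * s, -s, s] = gapWeight b := by
  rcases Nat.even_or_odd b with hb | hb
  · rw [hb.neg_one_pow, gapWeight, if_pos hb]
    revert hs; cases s <;> decide
  · rw [hb.neg_one_pow, gapWeight, if_neg (Nat.not_even_iff_odd.2 hb)]
    revert hs; cases s <;> decide

theorem signChanges_map_insert {α : Type*} {σ σ' : α → SignType} {neg pos : List α}
    {x₁ x₀ x₂ : α} {b : ℕ} (hs : σ x₀ ≠ 0) (hneg : ∀ x ∈ neg, σ' x = (-1) ^ b * σ x)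
    (hpos : ∀ x ∈ pos, σ' x = σ x) (h₁ : σ' x₁ = (-1) ^ b * σ x₀) (h₀ : σ' x₀ = -σ x₀)
    (h₂ : σ' x₂ = σ x₀) :
    signChanges ((neg ++ x₁ :: x₀ :: x₂ :: pos).map σ') =
      signChanges ((neg ++ x₀ :: pos).map σ) + gapWeight b := by
  have hmap : (neg ++ x₁ :: x₀ :: x₂ :: pos).map σ' =
      (neg.map σ).map ((-1) ^ b * ·) ++ (-1) ^ b * σ x₀ :: -σ x₀ :: σ x₀ :: pos.map σ := by
    simp only [List.map_append, List.map_cons, List.map_map, h₁, h₀, h₂]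
    congr 1
    · exact List.map_congr_left hneg
    · congr 3
      exact List.map_congr_left hpos
  rw [hmap, signChanges_insert (by rw [← mul_pow]; simp), signChanges_neg_one_pow_mul b hs]
  simp

namespace Polynomial

theorem mem_support_X_pow_mul {K : Type*} [Semiring K] {p : K[X]} {n m : ℕ} :
    m ∈ (X ^ n * p).support ↔ n ≤ m ∧ m - n ∈ p.support := by
  rw [mem_support_iff, coeff_X_pow_mul', mem_support_iff]
  split_ifs with h <;> simp [h]

theorem support_X_mul_derivative_subset {K : Type*} [Semiring K] (f : K[X]) :
    (X * derivative f).support ⊆ f.support := by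
  intro m hm
  rw [mem_support_iff] at hm ⊢
  cases m with
  | zero => simp at hm
  | succ m => rw [coeff_X_mul, coeff_derivative] at hm; exact left_ne_zero_of_mul hm

theorem mem_of_forall_X_pow_mem {K : Type*} [CommSemiring K] {R : Subalgebra K K[X]} {f : K[X]}
    (h : ∀ m ∈ f.support, (X : K[X]) ^ m ∈ R) : f ∈ R := by
  rw [f.as_sum_support]
  exact Subalgebra.sum_mem _ fun m hm => by
    rw [← C_mul_X_pow_eq_monomial, ← smul_eq_C_mul]; exact R.smul_mem (h m hm) _

theorem X_pow_mem_adjoin_of_mem_support {K ι : Type*} [CommSemiring K] {d : ι → ℕ} {f : K[X]}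
    (hf : f ∈ Algebra.adjoin K (Set.range fun i => (X : K[X]) ^ d i)) {m : ℕ}
    (hm : m ∈ f.support) :
    (X : K[X]) ^ m ∈ Algebra.adjoin K (Set.range fun i => (X : K[X]) ^ d i) := by
  induction hf using Algebra.adjoin_induction generalizing m with
  | mem x hx =>
    obtain ⟨i, rfl⟩ := hx
    simp only [X_pow_eq_monomial] at hm
    rw [Finset.mem_singleton.1 (support_monomial_subset _ _ hm)]
    exact Algebra.subset_adjoin ⟨i, rfl⟩
  | algebraMap a =>
    rw [Finset.mem_singleton.1 (support_C_subset a hm), pow_zero]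
    exact one_mem _
  | add x y _ _ hx hy =>
    rcases Finset.mem_union.1 (support_add hm) with h | h
    exacts [hx h, hy h]
  | mul x y _ _ hx hy =>
    rw [mem_support_iff, coeff_mul] at hm
    obtain ⟨⟨i, j⟩, hij, h⟩ := Finset.exists_ne_zero_of_sum_ne_zero hm
    rw [← Finset.HasAntidiagonal.mem_antidiagonal.1 hij, pow_add]
    exact mul_mem (hx (mem_support_iff.2 (left_ne_zero_of_mul h)))
      (hy (mem_support_iff.2 (right_ne_zero_of_mul h)))

theorem natDegree_eq_of_forall_mem_support_iff {K : Type*} [Semiring K] {P : K[X]} {l : List ℕ}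
    {d : ℕ} (hl : (l ++ [d]).Pairwise (· < ·)) (hP : ∀ m, m ∈ P.support ↔ m ∈ l ++ [d]) :
    P.natDegree = d := by
  have hdP : d ∈ P.support := (hP d).2 (by simp)
  have hP0 : P ≠ 0 := by rintro rfl; simp at hdP
  refine le_antisymm ?_ (le_natDegree_of_mem_supp d hdP)
  rcases List.mem_append.1 ((hP _).1 (natDegree_mem_support_of_nonzero hP0)) with h | h
  · exact (List.pairwise_append.1 hl).2.2 _ h d (List.mem_singleton_self d) |>.le
  · exact (List.mem_singleton.1 h).le

theorem comp_neg_X_eraseLead {K : Type*} [CommRing K] [IsDomain K] (P : K[X]) :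
    (P.comp (-X)).eraseLead = P.eraseLead.comp (-X) := by
  have hdeg : (P.comp (-X)).natDegree = P.natDegree := by simp [natDegree_comp]
  have hmon (n : ℕ) (a : K) : (monomial n a).comp (-X) = monomial n ((-1) ^ n * a) := by
    rw [monomial_comp, neg_pow, ← C_mul_X_pow_eq_monomial, C_mul, C_pow, C_neg, C_1]
    ring
  rw [← self_sub_monomial_natDegree_leadingCoeff, ← self_sub_monomial_natDegree_leadingCoeff,
    sub_comp, comp_neg_X_leadingCoeff_eq, hdeg, hmon]

theorem exists_isRoot_of_mul_neg (Q : ℝ[X]) {x y : ℝ} (hxy : x ≤ y)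
    (h : Q.eval x * Q.eval y < 0) : ∃ r ∈ Set.Ioo x y, Q.IsRoot r := by
  have hc : ContinuousOn (fun t => Q.eval t) (Set.Icc x y) := Q.continuous.continuousOn
  rcases mul_neg_iff.1 h with ⟨hx, hy⟩ | ⟨hx, hy⟩
  · exact intermediate_value_Ioo' hxy hc ⟨hy, hx⟩
  · exact intermediate_value_Ioo hxy hc ⟨hx, hy⟩

end Polynomial

section OrderedRing

variable {K : Type*} [CommRing K] [LinearOrder K] [IsStrictOrderedRing K]

theorem Polynomial.card_roots_toFinset_filter_pos_le (p : K[X]) :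
    (p.roots.toFinset.filter (0 < ·)).card ≤ p.signVariations := by
  rw [← Multiset.toFinset_filter]
  exact (Multiset.toFinset_card_le _).trans
    ((Multiset.countP_eq_card_filter _ _).symm.trans_le (roots_countP_pos_le_signVariations p))

theorem Polynomial.card_roots_toFinset_filter_neg_le (p : K[X]) :
    (p.roots.toFinset.filter (· < 0)).card ≤ (p.comp (-X)).signVariations := by
  refine le_trans (le_of_eq ?_) (card_roots_toFinset_filter_pos_le _)
  rw [roots_comp_neg_X, Multiset.toFinset_map, Finset.filter_image,
    Finset.card_image_of_injective _ neg_injective]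
  simp

/-- The left side counts the sign changes that consecutive terms `a X ^ d` and `b X ^ d'`
contribute to `P(X)` and to `P(-X)`. -/
theorem ite_sign_add_ite_sign_neg_one_pow_le_gapWeight {a b : K} (ha : a ≠ 0) {d d' : ℕ}
    (hd : d' ≤ d) :
    (if SignType.sign a = -SignType.sign b then 1 else 0) +
      (if SignType.sign ((-1) ^ d * a) = -SignType.sign ((-1) ^ d' * b) then 1 else 0) ≤
      gapWeight (d - d') := by
  obtain ⟨g, rfl⟩ := Nat.exists_eq_add_of_le hd
  have ha := sign_ne_zero.2 ha
  simp only [sign_mul, sign_pow, Left.sign_neg, sign_one, pow_add, Nat.add_sub_cancel_left,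
    gapWeight]
  generalize SignType.sign a = sa, SignType.sign b = sb at *
  rcases Nat.even_or_odd d' with h' | h' <;> rcases Nat.even_or_odd g with h | h <;>
    simp only [h.neg_one_pow, h'.neg_one_pow] <;>
    cases sa <;> cases sb <;> simp_all [← Nat.not_even_iff_odd]

theorem signVariations_add_signVariations_comp_neg_X_le {l : List ℕ} (hl : l.Pairwise (· < ·))
    {P : K[X]} (hP : ∀ m, m ∈ P.support ↔ m ∈ l) :
    P.signVariations + (P.comp (-X)).signVariations ≤ chainWeight l := by
  induction l using List.reverseRecOn generalizing P with
  | nil =>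
    simp [support_eq_empty.1 (Finset.ext fun m => by simp [hP] : P.support = ∅)]
  | append_singleton l d ih =>
    obtain ⟨hl', -, hld⟩ := List.pairwise_append.1 hl
    have hlt : ∀ m ∈ l, m < d := fun m hm => hld m hm d (List.mem_singleton_self d)
    have hP0 : P ≠ 0 := by rintro rfl; simpa using (hP d).2 (by simp)
    have hdeg : P.natDegree = d := natDegree_eq_of_forall_mem_support_iff hl hP
    have hE : ∀ m, m ∈ P.eraseLead.support ↔ m ∈ l := by
      intro m
      rw [eraseLead_support, Finset.mem_erase, hP, hdeg, List.mem_append, List.mem_singleton]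
      constructor
      · rintro ⟨hmd, hm | rfl⟩
        exacts [hm, absurd rfl hmd]
      · exact fun hm => ⟨(hlt m hm).ne, Or.inl hm⟩
    rw [signVariations_eq_eraseLead_add_ite hP0,
      signVariations_eq_eraseLead_add_ite (comp_neg_X_eq_zero_iff.not.2 hP0), comp_neg_X_eraseLead,
      comp_neg_X_leadingCoeff_eq, comp_neg_X_leadingCoeff_eq, hdeg]
    have ih := ih hl' hE
    rcases l.eq_nil_or_concat with rfl | ⟨l, d', rfl⟩
    · simp [support_eq_empty.1 (Finset.ext fun m => by simp [hE] : P.eraseLead.support = ∅),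
        leadingCoeff_ne_zero.2 hP0]
    · rw [List.concat_eq_append] at ih hE hl' ⊢
      have hdeg' : P.eraseLead.natDegree = d' := natDegree_eq_of_forall_mem_support_iff hl' hE
      have hcw : chainWeight (l ++ [d'] ++ [d]) = chainWeight (l ++ [d']) + gapWeight (d - d') := by
        rw [List.append_assoc, List.singleton_append, chainWeight, List.adjacentSum_append_cons]
        rfl
      have := ite_sign_add_ite_sign_neg_one_pow_le_gapWeight (leadingCoeff_ne_zero.2 hP0)
        (b := P.eraseLead.leadingCoeff) (hlt d' (by simp)).le
      rw [hdeg']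
      omega

theorem card_roots_toFinset_le_rootBound (g : K[X]) :
    g.roots.toFinset.card ≤ rootBound g.support.sort := by
  have hzero : (g.roots.toFinset.filter (· = 0)).card ≤ if 0 ∈ g.support.sort then 0 else 1 := by
    simp only [Finset.filter_eq', Finset.mem_sort, mem_support_iff, coeff_zero_eq_eval_zero]
    split_ifs <;> simp_all
  have hnonzero : g.roots.toFinset.filter (¬· = 0) ⊆
      g.roots.toFinset.filter (0 < ·) ∪ g.roots.toFinset.filter (· < 0) := by
    intro x
    simp only [Finset.mem_filter, Finset.mem_union]
    rintro ⟨hx, hx0⟩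
    rcases lt_or_gt_of_ne hx0 with h | h
    exacts [Or.inr ⟨hx, h⟩, Or.inl ⟨hx, h⟩]
  have := (Finset.card_le_card hnonzero).trans (Finset.card_union_le _ _)
  have := card_roots_toFinset_filter_pos_le g
  have := card_roots_toFinset_filter_neg_le g
  have := signVariations_add_signVariations_comp_neg_X_le g.support.sortedLT_sort.pairwise
    fun m => (Finset.mem_sort _).symm
  rw [← Finset.card_filter_add_card_filter_not (· = 0), rootBound]
  omega

end OrderedRing

theorem signChanges_map_sign_eval_le (Q : ℝ[X]) {x : ℝ} {l : List ℝ}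
    (hl : (x :: l).Pairwise (· < ·)) :
    signChanges ((x :: l).map fun t => SignType.sign (Q.eval t)) ≤
      (Q.roots.toFinset.filter (x < ·)).card := by
  induction l generalizing x with
  | nil => simp [signChanges]
  | cons y l ih =>
    obtain ⟨hxl, hyl⟩ := List.pairwise_cons.1 hl
    have hxy := hxl y List.mem_cons_self
    have hsub : Q.roots.toFinset.filter (y < ·) ⊆ Q.roots.toFinset.filter (x < ·) :=
      Finset.monotone_filter_right _ fun _ _ ht => hxy.trans ht
    have := ih hyl
    simp only [List.map_cons, signChanges, List.adjacentSum_cons_cons] at this ⊢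
    split_ifs with hs
    · rw [← sign_mul, sign_eq_neg_one_iff] at hs
      obtain ⟨r, hr, hroot⟩ := Q.exists_isRoot_of_mul_neg hxy.le hs
      have hQ : Q ≠ 0 := by rintro rfl; simp at hs
      have hrx : r ∈ Q.roots.toFinset.filter (x < ·) := by simp [hQ, hroot.eq_zero, hr.1]
      have hry : r ∉ Q.roots.toFinset.filter (y < ·) := by simp [hr.2.le]
      have := Finset.card_lt_card (Finset.ssubset_iff_subset_ne.2 ⟨hsub, fun h => hry (h ▸ hrx)⟩)
      omega
    · have := Finset.card_le_card hsub
      omega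

/-- The test point `0` is where `HasSignChanges.exists_X_pow_mul_add_C` creates new sign
changes. -/
def HasSignChanges (Q : ℝ[X]) (n : ℕ) : Prop :=
  ∃ pts : List ℝ, pts.Pairwise (· < ·) ∧ 0 ∈ pts ∧ (∀ x ∈ pts, Q.eval x ≠ 0) ∧
    n ≤ signChanges (pts.map fun x => SignType.sign (Q.eval x))

theorem HasSignChanges.eval_zero_ne_zero {Q : ℝ[X]} {n : ℕ} (h : HasSignChanges Q n) :
    Q.eval 0 ≠ 0 :=
  let ⟨_, _, h0, hne, _⟩ := h
  hne 0 h0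

theorem HasSignChanges.le_card_roots {Q : ℝ[X]} {n : ℕ} (h : HasSignChanges Q n) :
    n ≤ Q.roots.toFinset.card := by
  obtain ⟨_ | ⟨x, l⟩, hsort, h0, -, hn⟩ := h
  · simp at h0
  · exact hn.trans ((signChanges_map_sign_eval_le Q hsort).trans
      (Finset.card_le_card (Finset.filter_subset _ _)))

theorem sign_add_of_abs_lt {K : Type*} [Field K] [LinearOrder K] [IsStrictOrderedRing K] {p a : K}
    (h : |a| < |p|) :
    SignType.sign (p + a) = SignType.sign p := by
  rcases lt_trichotomy p 0 with hp | rfl | hp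
  · rw [abs_of_neg hp] at h
    rw [sign_neg hp, sign_neg (by linarith [le_abs_self a])]
  · simp at h; linarith [abs_nonneg a]
  · rw [abs_of_pos hp] at h
    rw [sign_pos hp, sign_pos (by linarith [neg_abs_le a])]

theorem exists_pos_sign_eval_eq {Q : ℝ[X]} (hQ : Q.eval 0 ≠ 0) {neg pos : List ℝ}
    (hneg : ∀ x ∈ neg, x < 0) (hpos : ∀ x ∈ pos, 0 < x) :
    ∃ δ > 0, (∀ x ∈ neg, x < -δ) ∧ (∀ x ∈ pos, δ < x) ∧
      SignType.sign (Q.eval (-δ)) = SignType.sign (Q.eval 0) ∧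
      SignType.sign (Q.eval δ) = SignType.sign (Q.eval 0) := by
  have hsign : ∀ᶠ x in 𝓝 (0 : ℝ), SignType.sign (Q.eval x) = SignType.sign (Q.eval 0) :=
    (ContinuousAt.comp (f := fun x => Q.eval x) (continuousAt_sign_of_ne_zero hQ)
      Q.continuous.continuousAt).eventually_mem ((isOpen_discrete {_}).mem_nhds rfl)
  have hneg' : ∀ᶠ δ in 𝓝 (0 : ℝ), ∀ x ∈ neg, x < -δ :=
    (eventually_all_finite neg.finite_toSet).2 fun x hx =>
      (eventually_lt_nhds (neg_pos.2 (hneg x hx))).mono fun δ h => by linarith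
  have hpos' : ∀ᶠ δ in 𝓝 (0 : ℝ), ∀ x ∈ pos, δ < x :=
    (eventually_all_finite pos.finite_toSet).2 fun x hx => eventually_lt_nhds (hpos x hx)
  have h := hneg'.and <| hpos'.and <|
    ((continuous_neg.tendsto' 0 0 neg_zero).eventually hsign).and hsign
  obtain ⟨δ, hδ, hδ0⟩ := ((h.filter_mono nhdsWithin_le_nhds).and
    (self_mem_nhdsWithin (s := Set.Ioi 0))).exists
  exact ⟨δ, hδ0, hδ⟩

theorem exists_pos_sign_eval_X_pow_mul_sub {Q : ℝ[X]} (b : ℕ) {L : List ℝ}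
    (hL : ∀ x ∈ L, x ^ b * Q.eval x ≠ 0) :
    ∃ η > 0, ∀ x ∈ L, SignType.sign ((X ^ b * Q + C (-(η * Q.eval 0))).eval x) =
      SignType.sign x ^ b * SignType.sign (Q.eval x) := by
  have h : ∀ᶠ η in 𝓝 (0 : ℝ), ∀ x ∈ L, |-(η * Q.eval 0)| < |x ^ b * Q.eval x| :=
    (eventually_all_finite L.finite_toSet).2 fun x hx =>
      (continuous_id.mul continuous_const).neg.abs.continuousAt.eventually_lt continuousAt_const
        (by simpa using abs_pos.2 (hL x hx))
  obtain ⟨η, hη, hη0⟩ := ((h.filter_mono nhdsWithin_le_nhds).and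
    (self_mem_nhdsWithin (s := Set.Ioi 0))).exists
  refine ⟨η, hη0, fun x hx => ?_⟩
  rw [eval_add, eval_C, eval_mul, eval_pow, eval_X, sign_add_of_abs_lt (hη x hx), sign_mul,
    sign_pow]

theorem HasSignChanges.exists_X_pow_mul_add_C {Q : ℝ[X]} {n b : ℕ} (hQ : HasSignChanges Q n)
    (hb : 0 < b) : ∃ a : ℝ, HasSignChanges (X ^ b * Q + C a) (n + gapWeight b) := by
  have hQ0 := hQ.eval_zero_ne_zero
  obtain ⟨pts, hsort, h0, hne, hn⟩ := hQ
  obtain ⟨neg, pos, rfl⟩ := List.append_of_mem h0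
  obtain ⟨hnegs, hposs, hnegpos⟩ := List.pairwise_append.1 hsort
  obtain ⟨hpos, hposs⟩ := List.pairwise_cons.1 hposs
  have hneg : ∀ x ∈ neg, x < 0 := fun x hx => hnegpos x hx 0 List.mem_cons_self
  obtain ⟨δ, hδ, hδneg, hδpos, hsδ₁, hsδ₂⟩ := exists_pos_sign_eval_eq hQ0 hneg hpos
  set L := neg ++ -δ :: δ :: pos
  have hL : ∀ x ∈ L, x ^ b * Q.eval x ≠ 0 := by
    simp only [L, List.mem_append, List.mem_cons]
    rintro x (hx | rfl | rfl | hx)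
    · exact mul_ne_zero (pow_ne_zero _ (hneg x hx).ne) (hne x (by simp [hx]))
    · exact mul_ne_zero (pow_ne_zero _ (by linarith)) (sign_ne_zero.1 (hsδ₁ ▸ sign_ne_zero.2 hQ0))
    · exact mul_ne_zero (pow_ne_zero _ hδ.ne') (sign_ne_zero.1 (hsδ₂ ▸ sign_ne_zero.2 hQ0))
    · exact mul_ne_zero (pow_ne_zero _ (hpos x hx).ne') (hne x (by simp [hx]))
  obtain ⟨η, hη, hsign⟩ := exists_pos_sign_eval_X_pow_mul_sub b hL
  have heval0 : (X ^ b * Q + C (-(η * Q.eval 0))).eval 0 = -(η * Q.eval 0) := by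
    simp [zero_pow hb.ne']
  refine ⟨-(η * Q.eval 0), neg ++ -δ :: 0 :: δ :: pos, ?_, by simp, fun x hx => ?_, ?_⟩
  · simp only [List.pairwise_append, List.pairwise_cons, List.mem_cons]
    refine ⟨hnegs, ⟨?_, ?_, hδpos, hposs⟩, ?_⟩ <;> grind
  · rcases (by simp only [L, List.mem_append, List.mem_cons] at hx ⊢; tauto : x = 0 ∨ x ∈ L)
      with rfl | hx
    · rw [heval0]
      exact neg_ne_zero.2 (mul_ne_zero hη.ne' hQ0)
    · refine sign_ne_zero.1 ?_
      rw [hsign x hx, ← sign_pow, ← sign_mul]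
      exact sign_ne_zero.2 (hL x hx)
  · rw [signChanges_map_insert (σ := fun x => SignType.sign (Q.eval x)) (x₀ := 0)
      (sign_ne_zero.2 hQ0)]
    · exact Nat.add_le_add_right hn _
    · intro x hx
      rw [hsign x (by simp [L, hx]), sign_neg (hneg x hx)]
    · intro x hx
      rw [hsign x (by simp [L, hx]), sign_pos (hpos x hx), one_pow, one_mul]
    · rw [hsign _ (by simp [L]), sign_neg (neg_lt_zero.2 hδ), hsδ₁]
    · rw [heval0, Left.sign_neg, sign_mul, sign_pos hη, one_mul]
    · rw [hsign _ (by simp [L]), sign_pos hδ, hsδ₂, one_pow, one_mul]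

theorem exists_hasSignChanges_chainWeight (e : ℕ) (S : List ℕ)
    (hS : (e :: S).Pairwise (· < ·)) :
    ∃ Q : ℝ[X], (∀ m ∈ Q.support, e + m ∈ e :: S) ∧ HasSignChanges Q (chainWeight (e :: S)) := by
  induction S generalizing e with
  | nil => exact ⟨1, fun m hm => by simp_all [coeff_one], [0], by simp, by simp, by simp, by simp⟩
  | cons b S ih =>
    obtain ⟨heS, hbS⟩ := List.pairwise_cons.1 hS
    have heb := heS b List.mem_cons_self
    obtain ⟨Q, hsupp, hQ⟩ := ih b hbS
    obtain ⟨a, ha⟩ := hQ.exists_X_pow_mul_add_C (Nat.sub_pos_of_lt heb)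
    refine ⟨X ^ (b - e) * Q + C a, fun m hm => ?_, by rwa [chainWeight_cons_cons, Nat.add_comm]⟩
    rcases Finset.mem_union.1 (support_add hm) with hm | hm
    · obtain ⟨hbm, hm⟩ := mem_support_X_pow_mul.1 hm
      rw [show e + m = b + (m - (b - e)) by omega]
      exact List.mem_cons_of_mem e (hsupp _ hm)
    · simp [Finset.mem_singleton.1 (support_C_subset a hm)]

theorem card_roots_toFinset_X_pow_mul {Q : ℝ[X]} (hQ : Q.eval 0 ≠ 0) (e : ℕ) :
    (X ^ e * Q).roots.toFinset.card = (if e = 0 then 0 else 1) + Q.roots.toFinset.card := by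
  have hQ0 : Q ≠ 0 := by rintro rfl; simp at hQ
  rw [roots_mul (mul_ne_zero (pow_ne_zero _ X_ne_zero) hQ0), roots_X_pow, Multiset.toFinset_add]
  split_ifs with he
  · simp [he]
  · rw [Multiset.toFinset_nsmul _ _ he, Multiset.toFinset_singleton, Finset.singleton_union,
      Finset.card_insert_of_notMem (by simp [hQ]), add_comm]

theorem card_roots_le_descartesNumber {R : Subalgebra ℝ ℝ[X]} {c : ℕ} {w : ℝ[X]} (hw : w ∈ R)
    (hw0 : w ≠ 0) (hdeg : w.natDegree ≤ c) : w.roots.toFinset.card ≤ descartesNumber R c :=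
  le_csSup ⟨c, by
    rintro m ⟨g, -, -, hg, rfl⟩
    exact (Multiset.toFinset_card_le _).trans ((card_roots' g).trans hg)⟩ ⟨w, hw, hw0, hdeg, rfl⟩

theorem rootBound_le_descartesNumber {R : Subalgebra ℝ ℝ[X]} {c : ℕ} {C : List ℕ} (hne : C ≠ [])
    (hC : C.Pairwise (· < ·)) (hR : ∀ m ∈ C, (X : ℝ[X]) ^ m ∈ R) (hc : ∀ m ∈ C, m ≤ c) :
    rootBound C ≤ descartesNumber R c := by
  obtain ⟨e, S, rfl⟩ := List.exists_cons_of_ne_nil hne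
  obtain ⟨Q, hsupp, hQ⟩ := exists_hasSignChanges_chainWeight e S hC
  have hQ0 := hQ.eval_zero_ne_zero
  have hw : ∀ m ∈ (X ^ e * Q).support, m ∈ e :: S := fun m hm => by
    obtain ⟨hem, hm⟩ := mem_support_X_pow_mul.1 hm
    simpa [Nat.add_sub_cancel' hem] using hsupp _ hm
  have hw0 : X ^ e * Q ≠ 0 := mul_ne_zero (pow_ne_zero _ X_ne_zero) (by rintro rfl; simp at hQ0)
  calc rootBound (e :: S) = (if e = 0 then 0 else 1) + chainWeight (e :: S) := by
        simp only [rootBound, zero_mem_cons_iff hC]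
    _ ≤ (X ^ e * Q).roots.toFinset.card := by
        rw [card_roots_toFinset_X_pow_mul hQ0]
        exact Nat.add_le_add_left hQ.le_card_roots _
    _ ≤ descartesNumber R c :=
        card_roots_le_descartesNumber (mem_of_forall_X_pow_mem fun m hm => hR m (hw m hm)) hw0
          (hc _ (hw _ (natDegree_mem_support_of_nonzero hw0)))

theorem card_roots_le_descartesNumber_add {R : Subalgebra ℝ ℝ[X]}
    (hR : ∀ f ∈ R, ∀ m ∈ f.support, (X : ℝ[X]) ^ m ∈ R) {c n : ℕ} (hc : (X : ℝ[X]) ^ c ∈ R)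
    {g : ℝ[X]} (hg : g ∈ R) (hn : ∀ m ∈ g.support, m ≤ n) :
    g.roots.toFinset.card ≤ descartesNumber R c + (n - c) := by
  have hS := card_roots_toFinset_le_rootBound g
  have hsorted := g.support.sortedLT_sort.pairwise
  have hmem : ∀ m, m ∈ g.support.sort ↔ m ∈ g.support := fun m => Finset.mem_sort _
  generalize g.support.sort = S at hS hsorted hmem
  rcases S with _ | ⟨e, S⟩
  · simp [support_eq_empty.1 (Finset.ext fun m => by simp [← hmem] : g.support = ∅)]
  · calc _ ≤ rootBound (e :: S) := hS
      _ ≤ rootBound ((e :: S).filter (· < c) ++ [c]) + (n - c) :=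
          rootBound_le_rootBound_filter_append hsorted fun m hm => hn m ((hmem m).1 hm)
      _ ≤ descartesNumber R c + (n - c) := by
          refine Nat.add_le_add_right (rootBound_le_descartesNumber (by simp)
            (pairwise_filter_lt_append hsorted c) ?_ ?_) _
          · simp only [List.mem_append, List.mem_filter, List.mem_singleton]
            rintro m (⟨hm, -⟩ | rfl)
            exacts [hR g hg m ((hmem m).1 hm), hc]
          · simp only [List.mem_append, List.mem_filter, List.mem_singleton, decide_eq_true_eq]
            rintro m (⟨-, hm⟩ | rfl)
            exacts [hm.le, le_rfl]

theorem two_mul_card_roots_le_card_roots_X_mul_derivative {f : ℝ[X]} (hf : ∀ x, 0 ≤ f.eval x) :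
    2 * f.roots.toFinset.card ≤ (X * derivative f).roots.toFinset.card + 1 := by
  by_cases hf' : derivative f = 0
  · rw [eq_C_of_derivative_eq_zero hf']
    simp
  have hsub : f.roots.toFinset ⊆ (derivative f).roots.toFinset := by
    intro x hx
    have hx : f.eval x = 0 := (mem_roots'.1 (Multiset.mem_toFinset.1 hx)).2
    have hmin : IsLocalMin (fun y => f.eval y) x :=
      Eventually.of_forall fun y => by simp only [hx]; exact hf y
    simpa [hf', ← Polynomial.deriv] using hmin.deriv_eq_zero
  have hX : (derivative f).roots.toFinset ⊆ (X * derivative f).roots.toFinset :=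
    Multiset.toFinset_subset.2
      (Multiset.subset_of_le (roots.le_of_dvd (mul_ne_zero X_ne_zero hf') (dvd_mul_left _ _)))
  have := f.card_roots_toFinset_le_card_roots_derivative_sdiff_roots_succ
  have := Finset.card_sdiff_add_card_eq_card hsub
  have := Finset.card_le_card hX
  omega

theorem upper_bound_zeros_nonneg_general (r : ℕ) (dv : Fin r → ℕ)
    (R : Subalgebra ℝ ℝ[X])
    (hR : R = Algebra.adjoin ℝ (Set.range fun i => (X : ℝ[X]) ^ dv i))
    (c : ℕ)
    (hc : IsLeast {c : ℕ | ∀ m : ℕ, c ≤ m → (X : ℝ[X]) ^ m ∈ R} c)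
    (k : ℕ) (hk : c ≤ k)
    (f : ℝ[X]) (hfR : f ∈ R) (hdeg : f.natDegree ≤ 2 * k)
    (hpos : ∀ x : ℝ, 0 ≤ f.eval x) :
    (f.roots.toFinset.card : ℤ) ≤
      (k : ℤ) - ⌈((c : ℚ) - (descartesNumber R c : ℚ) - 1) / 2⌉ := by
  have hmono : ∀ g ∈ R, ∀ m ∈ g.support, (X : ℝ[X]) ^ m ∈ R := by
    subst hR
    exact fun g hg m hm => X_pow_mem_adjoin_of_mem_support hg hm
  have hsupp := support_X_mul_derivative_subset f
  have hroots := card_roots_le_descartesNumber_add hmono (hc.1 c le_rfl)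
    (mem_of_forall_X_pow_mem fun m hm => hmono f hfR m (hsupp hm))
    fun m hm => (le_natDegree_of_mem_supp m (hsupp hm)).trans hdeg
  have hcount := (two_mul_card_roots_le_card_roots_X_mul_derivative hpos).trans
    (Nat.add_le_add_right hroots 1)
  have hcountℚ : (2 * f.roots.toFinset.card + c : ℚ) ≤ 2 * k + descartesNumber R c + 1 := by
    exact_mod_cast (by omega : 2 * f.roots.toFinset.card + c ≤ 2 * k + descartesNumber R c + 1)
  rw [le_sub_comm, Int.ceil_le, div_le_iff₀ two_pos]
  push_cast
  linarith

/-- For `R = ℝ[t^{d₁},…,t^{d_r}]` with `gcd = 1`, conductor `c` and `k ≥ c`: a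
nonzero polynomial `f ∈ R_{≤2k}` that is nonnegative on `ℝ` has at most
`k - ⌈(c - D_c - 1)/2⌉` distinct real zeros. -/
theorem upper_bound_zeros_nonneg (r : ℕ) (dv : Fin r → ℕ)
    (hgcd : Finset.univ.gcd dv = 1)
    (R : Subalgebra ℝ ℝ[X])
    (hR : R = Algebra.adjoin ℝ (Set.range fun i => (X : ℝ[X]) ^ dv i))
    (c : ℕ)
    (hc : IsLeast {c : ℕ | ∀ m : ℕ, c ≤ m → (X : ℝ[X]) ^ m ∈ R} c)
    (k : ℕ) (hk : c ≤ k)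
    (f : ℝ[X]) (hfR : f ∈ R) (hf0 : f ≠ 0) (hdeg : f.natDegree ≤ 2 * k)
    (hpos : ∀ x : ℝ, 0 ≤ f.eval x) :
    (f.roots.toFinset.card : ℤ) ≤
      (k : ℤ) - ⌈((c : ℚ) - (descartesNumber R c : ℚ) - 1) / 2⌉ :=
  upper_bound_zeros_nonneg_general r dv R hR c hc k hk f hfR hdeg hpos
end

section
/- Let R = ℝ[t^{d₁},…,t^{d_r}] with gcd = 1 and conductor 𝔠. Given pairwise distinct real points p₁,…,p_n and e ≥ 𝔠 + n − 1, the point-evaluation functionals l_{p₁},…,l_{p_n} : R_{≤e} → ℝ given by l_{p_i}(g) = g(p_i) are linearly independent. -/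
open Polynomial

/-- For `R = ℝ[t^{d₁},…,t^{d_r}]` with `gcd = 1` and conductor `c`: the point
evaluations `l_{p₁},…,l_{p_n} : R_{≤e} → ℝ` at pairwise distinct points are
linearly independent whenever `e ≥ c + n - 1`. -/
theorem point_evaluations_linearIndependent (r : ℕ) (dv : Fin r → ℕ)
    (hgcd : Finset.univ.gcd dv = 1)
    (R : Subalgebra ℝ ℝ[X])
    (hR : R = Algebra.adjoin ℝ (Set.range fun i => (X : ℝ[X]) ^ dv i))
    (c : ℕ)
    (hc : IsLeast {c : ℕ | ∀ m : ℕ, c ≤ m → (X : ℝ[X]) ^ m ∈ R} c)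
    (n : ℕ) (hn : 1 ≤ n) (p : Fin n → ℝ) (hp : Function.Injective p)
    (e : ℕ) (he : c + n - 1 ≤ e) :
    LinearIndependent ℝ (fun i : Fin n =>
      (Polynomial.leval (p i)).comp
        (Subalgebra.toSubmodule R ⊓ Polynomial.degreeLE ℝ (e : WithBot ℕ)).subtype) := by
  have hX : ∀ m, c ≤ m → (X : ℝ[X]) ^ m ∈ R := hc.1
  -- X^c times anything is in R
  have hmul : ∀ q : ℝ[X], (X : ℝ[X]) ^ c * q ∈ R := by
    intro q
    induction q using Polynomial.induction_on' with
    | add f g hf hg => rw [mul_add]; exact add_mem hf hg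
    | monomial k a =>
      have h1 : (X : ℝ[X]) ^ c * monomial k a = a • (X : ℝ[X]) ^ (c + k) := by
        rw [← C_mul_X_pow_eq_monomial, smul_eq_C_mul, pow_add]; ring
      rw [h1]
      exact Subalgebra.smul_mem R (hX _ (Nat.le_add_right c k)) a
  rw [Fintype.linearIndependent_iff]
  intro a ha
  have key : ∀ q : ℝ[X],
      q ∈ Subalgebra.toSubmodule R ⊓ Polynomial.degreeLE ℝ (e : WithBot ℕ) →
      ∑ i, a i * q.eval (p i) = 0 := by
    intro q hq
    have := LinearMap.congr_fun ha ⟨q, hq⟩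
    simpa [LinearMap.sum_apply, leval_apply] using this
  -- Step 1: kill coefficients at nonzero points
  have step1 : ∀ j : Fin n, p j ≠ 0 → a j = 0 := by
    intro j hpj
    set q : ℝ[X] := (X : ℝ[X]) ^ c * ∏ i ∈ Finset.univ.erase j, (X - C (p i)) with hqdef
    have hdeg : q.degree ≤ (e : WithBot ℕ) := by
      have h1 : q.degree = (c : WithBot ℕ) + ∑ i ∈ Finset.univ.erase j, (1 : WithBot ℕ) := by
        rw [hqdef, degree_mul, degree_pow, degree_X, Polynomial.degree_prod]
        simp [degree_X_sub_C]
      rw [h1]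
      have hcard : (Finset.univ.erase j).card = n - 1 := by
        rw [Finset.card_erase_of_mem (Finset.mem_univ j), Finset.card_univ, Fintype.card_fin]
      rw [Finset.sum_const, hcard]
      have : ((c : WithBot ℕ)) + (n - 1 : ℕ) • (1 : WithBot ℕ) = ((c + (n - 1) : ℕ) : WithBot ℕ) := by
        simp [nsmul_eq_mul]
      rw [this]
      exact_mod_cast (by omega : c + (n - 1) ≤ e)
    have hmem : q ∈ Subalgebra.toSubmodule R ⊓ Polynomial.degreeLE ℝ (e : WithBot ℕ) := by
      refine Submodule.mem_inf.2 ⟨hmul _, ?_⟩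
      rw [Polynomial.mem_degreeLE]; exact hdeg
    have hsum := key q hmem
    have heval : ∀ i, q.eval (p i) = (p i) ^ c * ∏ k ∈ Finset.univ.erase j, (p i - p k) := by
      intro i; simp [hqdef, eval_prod]
    rw [Finset.sum_eq_single j] at hsum
    · have hne : q.eval (p j) ≠ 0 := by
        rw [heval]
        refine mul_ne_zero (pow_ne_zero _ hpj) (Finset.prod_ne_zero_iff.2 ?_)
        intro k hk
        have : k ≠ j := (Finset.mem_erase.1 hk).1
        exact sub_ne_zero.2 fun h => this (hp (h.symm) ▸ rfl)
      exact (mul_eq_zero.1 hsum).resolve_right hne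
    · intro i _ hij
      have : q.eval (p i) = 0 := by
        rw [heval]
        exact mul_eq_zero_of_right _
          (Finset.prod_eq_zero (Finset.mem_erase.2 ⟨hij, Finset.mem_univ i⟩) (sub_self _))
      rw [this, mul_zero]
    · intro h; exact absurd (Finset.mem_univ j) h
  -- Step 2: use the constant 1
  intro j
  by_cases hpj : p j = 0
  · have hmem1 : (1 : ℝ[X]) ∈ Subalgebra.toSubmodule R ⊓ Polynomial.degreeLE ℝ (e : WithBot ℕ) := by
      refine Submodule.mem_inf.2 ⟨one_mem R, ?_⟩
      rw [Polynomial.mem_degreeLE, degree_one]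
      exact_mod_cast Nat.cast_nonneg' e
    have hsum := key 1 hmem1
    simp only [eval_one, mul_one] at hsum
    rw [Finset.sum_eq_single j] at hsum
    · exact hsum
    · intro i _ hij
      apply step1
      intro h
      exact hij (hp (h.trans hpj.symm))
    · intro h; exact absurd (Finset.mem_univ j) h
  · exact step1 j hpj
end
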